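/- arXiv:1809.05797 — 3 statements merged into one kernel-verified Lean document; each statement's English description precedes it below -/
import Mathlib

section
/- In a state-based potential game with potential function φ, any action-state pair [a*,x*] that maximizes φ over A × X and satisfies that x* is a recurrent state of the Markov chain P(a*;·,·) starting from x* (i.e., x* ∈ X(a*|x) for every x ∈ X(a*|x*)) is a recurrent state equilibrium. -/
/-- `y` is reachable from `x` with positive probability under the constant joint action `a`. -/
def Reach {ι : Type*} {A : ι → Type*} {X : Type*}
    (P : (∀ i, A i) → X → X → ℝ) (a : ∀ i, A i) : X → X → Prop :=
  Relation.TransGen fun u v => 0 < P a u v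

/-- `[a, x]` is a recurrent state equilibrium (Definition 3). -/
def IsRSE {ι : Type*} [DecidableEq ι] {A : ι → Type*} {X : Type*}
    (P : (∀ i, A i) → X → X → ℝ) (c : ι → (∀ i, A i) → X → ℝ)
    (a : ∀ i, A i) (x : X) : Prop :=
  (∀ y, Reach P a x y → Reach P a y x) ∧
  (∀ y, Reach P a x y → ∀ i (b : A i),
    c i (Function.update a i b) y ≤ c i a y)

/-- `φ` is a potential function for the state-based game (Definition 5). -/
def IsPotential {ι : Type*} [DecidableEq ι] {A : ι → Type*} {X : Type*}
    (P : (∀ i, A i) → X → X → ℝ) (c : ι → (∀ i, A i) → X → ℝ)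
    (φ : (∀ i, A i) → X → ℝ) : Prop :=
  (∀ i (b : A i) (a : ∀ i, A i) (x : X),
    c i (Function.update a i b) x - c i a x = φ (Function.update a i b) x - φ a x) ∧
  (∀ (a : ∀ i, A i) (x x' : X), 0 < P a x x' → φ a x ≤ φ a x')

/-!
The potential never decreases along a positive-probability transition, so at every state `y`
reachable from `x*` under `a*` it already attains its global maximum `φ(a*, x*)`. Hence no
unilateral deviation can raise the potential at `y`, and since deviation gains in cost equal
those in potential, `a*` is a Nash equilibrium of the state-invariant game at `y`.
-/

namespace IsPotential

variable {ι : Type*} [DecidableEq ι] {A : ι → Type*} {X : Type*}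
  {P : (∀ i, A i) → X → X → ℝ} {c : ι → (∀ i, A i) → X → ℝ} {φ : (∀ i, A i) → X → ℝ}

theorem le_of_reach (hpot : IsPotential P c φ) {a : ∀ i, A i} {x y : X}
    (hxy : Reach P a x y) : φ a x ≤ φ a y := by
  induction hxy with
  | single hstep => exact hpot.2 _ _ _ hstep
  | tail _ hstep ih => exact ih.trans (hpot.2 _ _ _ hstep)

theorem cost_update_le (hpot : IsPotential P c φ) {a : ∀ i, A i} {y : X} (i : ι) (b : A i)
    (hle : φ (Function.update a i b) y ≤ φ a y) :
    c i (Function.update a i b) y ≤ c i a y := by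
  have hdiff := hpot.1 i b a y
  linarith

end IsPotential

theorem potential_maximizer_recurrent_is_rse_general {ι : Type*} [DecidableEq ι]
    {A : ι → Type*} {X : Type*}
    (P : (∀ i, A i) → X → X → ℝ) (c : ι → (∀ i, A i) → X → ℝ)
    (φ : (∀ i, A i) → X → ℝ) (hpot : IsPotential P c φ)
    (a : ∀ i, A i) (x : X)
    (hmax : ∀ (b : ∀ i, A i) (y : X), φ b y ≤ φ a x)
    (hrec : ∀ y, Reach P a x y → Reach P a y x) :
    IsRSE P c a x := by
  refine ⟨hrec, fun y hy i b => hpot.cost_update_le i b ?_⟩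
  have hy_max : φ a y = φ a x := le_antisymm (hmax a y) (hpot.le_of_reach hy)
  exact hy_max ▸ hmax _ y

/-- In a state-based potential game, any maximizer `[a*,x*]` of the potential such that
`x*` is recurrent for `P(a*;·,·)` is a recurrent state equilibrium. -/
theorem potential_maximizer_recurrent_is_rse {ι : Type*} [DecidableEq ι] [Fintype ι]
    {A : ι → Type*} [∀ i, Fintype (A i)] {X : Type*} [Fintype X]
    (P : (∀ i, A i) → X → X → ℝ) (c : ι → (∀ i, A i) → X → ℝ)
    (φ : (∀ i, A i) → X → ℝ) (hpot : IsPotential P c φ)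
    (a : ∀ i, A i) (x : X)
    (hmax : ∀ (b : ∀ i, A i) (y : X), φ b y ≤ φ a x)
    (hrec : ∀ y, Reach P a x y → Reach P a y x) :
    IsRSE P c a x :=
  potential_maximizer_recurrent_is_rse_general P c φ hpot a x hmax hrec
end

section
/- Every finite state-based potential game possesses at least one recurrent state equilibrium. -/
open Relation in
theorem Relation.exists_reflTransGen_forall_transGen_symm {α : Type*} [Finite α]
    (r : α → α → Prop) (x : α) :
    ∃ y, ReflTransGen r x y ∧ ∀ z, TransGen r y z → TransGen r z y := by
  let : Preorder α :=
    { le := ReflTransGen r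
      le_refl := fun _ => .refl
      le_trans := fun _ _ _ => .trans }
  obtain ⟨y, hxy, hy⟩ := Finite.exists_le_maximal (p := fun _ => True) (a := x) trivial
  refine ⟨y, hxy, fun z hyz => ?_⟩
  obtain rfl | hzy := reflTransGen_iff_eq_or_transGen.mp (hy.2 trivial hyz.to_reflTransGen)
  exacts [hyz, hzy]

namespace IsPotential

variable {ι : Type*} [DecidableEq ι] {A : ι → Type*} {X : Type*}
  {P : (∀ i, A i) → X → X → ℝ} {c : ι → (∀ i, A i) → X → ℝ} {φ : (∀ i, A i) → X → ℝ}

theorem le_of_reflTransGen (hφ : IsPotential P c φ) {a : ∀ i, A i} {x y : X}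
    (hxy : Relation.ReflTransGen (fun u v => 0 < P a u v) x y) : φ a x ≤ φ a y := by
  induction hxy with
  | refl => exact le_rfl
  | tail _ hstep ih => exact ih.trans (hφ.2 a _ _ hstep)

theorem update_le_of_forall_le (hφ : IsPotential P c φ) {a : ∀ i, A i} {x : X}
    (hmax : ∀ b, φ b x ≤ φ a x) (i : ι) (b : A i) :
    c i (Function.update a i b) x ≤ c i a x := by
  have := hφ.1 i b a x
  linarith [hmax (Function.update a i b)]

end IsPotential

theorem exists_rse_of_potential_general {ι : Type*} [DecidableEq ι] [Fintype ι]
    {A : ι → Type*} [∀ i, Fintype (A i)] [∀ i, Nonempty (A i)]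
    {X : Type*} [Fintype X] [Nonempty X]
    (P : (∀ i, A i) → X → X → ℝ) (c : ι → (∀ i, A i) → X → ℝ)
    (φ : (∀ i, A i) → X → ℝ) (hpot : IsPotential P c φ) :
    ∃ (a : ∀ i, A i) (x : X), IsRSE P c a x := by
  obtain ⟨⟨a, x₀⟩, hmax⟩ := Finite.exists_max fun p : (∀ i, A i) × X => φ p.1 p.2
  obtain ⟨y, hx₀y, hrec⟩ :=
    Relation.exists_reflTransGen_forall_transGen_symm (fun u v => 0 < P a u v) x₀
  refine ⟨a, y, hrec, fun z hyz => hpot.update_le_of_forall_le fun b => ?_⟩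
  calc φ b z ≤ φ a x₀ := hmax (b, z)
    _ ≤ φ a z := hpot.le_of_reflTransGen (hx₀y.trans hyz.to_reflTransGen)

/-- Every finite state-based potential game possesses at least one recurrent state
equilibrium. -/
theorem exists_rse_of_potential {ι : Type*} [DecidableEq ι] [Fintype ι]
    {A : ι → Type*} [∀ i, Fintype (A i)] [∀ i, Nonempty (A i)]
    {X : Type*} [Fintype X] [Nonempty X]
    (P : (∀ i, A i) → X → X → ℝ) (c : ι → (∀ i, A i) → X → ℝ)
    (hP0 : ∀ a x y, 0 ≤ P a x y) (hP1 : ∀ a x, ∑ y, P a x y = 1)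
    (φ : (∀ i, A i) → X → ℝ) (hpot : IsPotential P c φ) :
    ∃ (a : ∀ i, A i) (x : X), IsRSE P c a x :=
  exists_rse_of_potential_general P c φ hpot
end

section
/- In the state-based game of Example 12, for every state x ∈ {3,4} and every joint action a, the pair [a,x] is not a recurrent state equilibrium, and the set {3,4} is closed under every transition matrix P(a;·,·); consequently, no learning process that generates states according to P can reach a recurrent state equilibrium from initial state 3 or 4. -/
/-- Payoff tables of Example 12: states `0,1,2,3` code the states `1,2,3,4`. -/
noncomputable def tbl12 : Fin 4 → Fin 2 → Fin 2 → ℝ × ℝ :=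
  ![![![(5, 4), (2, 3)], ![(4, 2), (3, 1)]],
    ![![(2, 2), (3, 1)], ![(0, 3), (2, 1)]],
    ![![(-1, 1), (1, -1)], ![(1, -1), (-1, 1)]],
    ![![(2, 2), (2, 3)], ![(0, 3), (3, 1)]]]

/-- Payoff functions of Example 12. -/
noncomputable def c12 : Fin 2 → ((i : Fin 2) → (fun _ => Fin 2) i) → Fin 4 → ℝ :=
  fun i a x => if i = 0 then (tbl12 x (a 0) (a 1)).1 else (tbl12 x (a 0) (a 1)).2

/-- State transitions of Example 12: every transition matrix is block diagonal with
blocks `{1,2}` and `{3,4}` (coded `{0,1}` and `{2,3}`), all entries within each block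
being strictly positive. -/
noncomputable def P12 : ((i : Fin 2) → (fun _ => Fin 2) i) → Fin 4 → Fin 4 → ℝ :=
  fun _ => ![![1/2, 1/2, 0, 0], ![1/2, 1/2, 0, 0],
             ![0, 0, 1/2, 1/2], ![0, 0, 1/2, 1/2]]

/-!
At state 3 the stage game is matching pennies, so no joint action is a pure Nash equilibrium
there, and under every joint action state 3 is reached in one step from both 3 and 4. Hence the
equilibrium condition of an RSE fails at a reachable state whenever the initial state is 3 or 4.
Block diagonality makes `{3, 4}` absorbing, so a trajectory started there never leaves it.
-/

section General

variable {ι : Type*} [DecidableEq ι] {A : ι → Type*} {X : Type*}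

def IsPureNash (c : ι → (∀ i, A i) → X → ℝ) (a : ∀ i, A i) (y : X) : Prop :=
  ∀ i (b : A i), c i (Function.update a i b) y ≤ c i a y

theorem IsRSE.isPureNash_of_reach {P : (∀ i, A i) → X → X → ℝ} {c : ι → (∀ i, A i) → X → ℝ}
    {a : ∀ i, A i} {x y : X} (h : IsRSE P c a x) (hy : Reach P a x y) : IsPureNash c a y :=
  h.2 y hy

theorem not_isRSE_of_reach_not_isPureNash {P : (∀ i, A i) → X → X → ℝ}
    {c : ι → (∀ i, A i) → X → ℝ} {a : ∀ i, A i} {x y : X} (hy : Reach P a x y)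
    (hne : ¬ IsPureNash c a y) : ¬ IsRSE P c a x :=
  fun h => hne (h.isPureNash_of_reach hy)

end General

def IsAbsorbing {Act X : Type*} (P : Act → X → X → ℝ) (S : Set X) : Prop :=
  ∀ a, ∀ x ∈ S, ∀ y, 0 < P a x y → y ∈ S

theorem IsAbsorbing.trajectory_mem {Act X : Type*} {P : Act → X → X → ℝ} {S : Set X}
    (hS : IsAbsorbing P S) {act : ℕ → Act} {x : ℕ → X} (h0 : x 0 ∈ S)
    (hstep : ∀ t, 0 < P (act t) (x t) (x (t + 1))) (t : ℕ) : x t ∈ S := by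
  induction t with
  | zero => exact h0
  | succ t ih => exact hS (act t) (x t) ih (x (t + 1)) (hstep t)

theorem not_isPureNash_c12_two (a : (i : Fin 2) → (fun _ => Fin 2) i) :
    ¬ IsPureNash c12 a 2 := by
  obtain ⟨u, v, rfl⟩ : ∃ u v, a = ![u, v] := ⟨a 0, a 1, by ext i; fin_cases i <;> rfl⟩
  intro h
  fin_cases u <;> fin_cases v
  · exact (h 0 1).not_gt (by simp [c12, tbl12, Function.update])
  · exact (h 1 0).not_gt (by simp [c12, tbl12, Function.update])
  · exact (h 1 1).not_gt (by simp [c12, tbl12, Function.update])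
  · exact (h 0 0).not_gt (by simp [c12, tbl12, Function.update])

theorem P12_isAbsorbing : IsAbsorbing P12 {2, 3} := by
  intro a x hx y hxy
  rcases hx with rfl | rfl <;> fin_cases y <;> simp_all [P12]

theorem reach_P12_two (a : (i : Fin 2) → (fun _ => Fin 2) i) {x : Fin 4}
    (hx : x ∈ ({2, 3} : Set (Fin 4))) : Reach P12 a x 2 := by
  refine .single ?_
  rcases hx with rfl | rfl <;> norm_num [P12, Matrix.cons_val_two, Matrix.cons_val_three,
    Matrix.vecHead, Matrix.vecTail]

/-- In Example 12, no pair `[a, x]` with `x ∈ {3,4}` is a recurrent state equilibrium,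
the set `{3,4}` is closed under every transition matrix, and consequently no trajectory
generated according to `P` starting in `{3,4}` ever reaches a recurrent state
equilibrium. -/
theorem example12 :
    (∀ (a : (i : Fin 2) → (fun _ => Fin 2) i) (x : Fin 4),
        x = 2 ∨ x = 3 → ¬ IsRSE P12 c12 a x) ∧
    (∀ (a : (i : Fin 2) → (fun _ => Fin 2) i) (x y : Fin 4),
        x = 2 ∨ x = 3 → 0 < P12 a x y → y = 2 ∨ y = 3) ∧
    (∀ (act : ℕ → (i : Fin 2) → (fun _ => Fin 2) i) (x : ℕ → Fin 4),
        (x 0 = 2 ∨ x 0 = 3) →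
        (∀ t, 0 < P12 (act t) (x t) (x (t + 1))) →
        ∀ t, ¬ IsRSE P12 c12 (act t) (x t)) := by
  have not_isRSE : ∀ a x, x = 2 ∨ x = 3 → ¬ IsRSE P12 c12 a x := fun a _ hx =>
    not_isRSE_of_reach_not_isPureNash (reach_P12_two a hx) (not_isPureNash_c12_two a)
  refine ⟨not_isRSE, fun a x y hx => P12_isAbsorbing a x hx y, ?_⟩
  intro act x h0 hstep t
  exact not_isRSE (act t) (x t) (P12_isAbsorbing.trajectory_mem h0 hstep t)
end
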